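/- Let F∗A be a twisted group algebra of a free abelian group A of rank n over a field F with basis {x₁, …, x_n}. Let M be a finitely generated right F∗A-module with gk(M) = r, 0 < r < n, such that M is not F∗⟨x₁,…,x_r⟩-torsion. Let S = F∗⟨x₁,…,x_r⟩∖{0}, let D be the quotient division ring of F∗⟨x₁,…,x_r⟩, so that the Ore localization (F∗A)S⁻¹ is a crossed product D∗⟨x_{r+1},…,x_n⟩. Then the localization MS⁻¹ is a nonzero D∗⟨x_{r+1},…,x_n⟩-module that is finite dimensional as a D-vector space. -/

import Mathlib

open MulOpposite

universe u v

/-- `KdimLT R k M` means the (Gabriel–Rentschler) Krull dimension of the `R`-module `M`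
is `< k` (i.e. `≤ k - 1`), where `KdimLT R 0 M` means `M = 0`. -/
def KdimLT (R : Type u) [Ring R] : ℕ → ModuleCat.{u} R → Prop
  | 0, M => Subsingleton M
  | k+1, M => ∀ f : ℕ → Submodule R M, Antitone f → ∃ N, ∀ i ≥ N,
      KdimLT R k (ModuleCat.of R (↥(f i) ⧸ Submodule.comap (f i).subtype (f (i+1))))

/-- `IsKrullDim R d` : the ring `R` has (Gabriel–Rentschler) Krull dimension exactly `d`. -/
def IsKrullDim (R : Type u) [Ring R] (d : ℕ) : Prop :=
  KdimLT R (d + 1) (ModuleCat.of R R) ∧ ∀ d' : ℕ, KdimLT R (d' + 1) (ModuleCat.of R R) → d ≤ d'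

/-- `PdimLE R k M` : the projective dimension of `M` is at most `k`.  (By Schanuel's lemma
this recursive definition, which uses the canonical free cover at every stage, agrees with
the usual definition of projective dimension.) -/
def PdimLE (R : Type u) [Ring R] : ℕ → ModuleCat.{u} R → Prop
  | 0, M => Module.Projective R M
  | k+1, M => PdimLE R k
      (ModuleCat.of R (LinearMap.ker (Finsupp.linearCombination R (id : M → M))))

/-- `IsGlobalDim R d` : the ring `R` has global dimension exactly `d`. -/
def IsGlobalDim (R : Type u) [Ring R] (d : ℕ) : Prop :=
  (∀ M : ModuleCat.{u} R, PdimLE R d M) ∧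
    ∀ d' : ℕ, (∀ M : ModuleCat.{u} R, PdimLE R d' M) → d ≤ d'

/-- By a theorem of McConnell and Pettit the Krull dimension and the global dimension of a
quantum torus (twisted group algebra of a f.g. free abelian group) coincide;
`IsDimension R d` says that `d` is this common value `dim R`. -/
def IsDimension (R : Type u) [Ring R] (d : ℕ) : Prop :=
  IsKrullDim R d ∧ IsGlobalDim R d

/-- `IsTwistedGroupAlgebra F R bar τ` : the `F`-algebra `R` is a twisted group algebra
`F∗A` of the free abelian group `A = ℤⁿ` over the field `F`: the units `bar a` (`a ∈ A`)
form an `F`-basis of `R` and multiply according to the 2-cocycle `τ` with values in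
`F∖{0}`. -/
structure IsTwistedGroupAlgebra (F : Type u) [Field F] {n : ℕ} (R : Type v) [Ring R]
    [Algebra F R] (bar : (Fin n → ℤ) → Rˣ) (τ : (Fin n → ℤ) → (Fin n → ℤ) → F) : Prop where
  τ_ne_zero : ∀ a b, τ a b ≠ 0
  cocycle : ∀ a b c, τ a b * τ (a + b) c = τ b c * τ a (b + c)
  mul_bar : ∀ a b, (bar a : R) * bar b = τ a b • (bar (a + b) : R)
  repr_unique : ∀ r : R, ∃! c : (Fin n → ℤ) →₀ F, r = c.sum fun a f => f • (bar a : R)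
/-- The `F`-span of `{bar b : b ∈ B}` in `R`; for a subgroup `B ≤ A` this is the
twisted group algebra `F∗B` sitting inside `F∗A`. -/
def tgaSpan (F : Type u) [Field F] {n : ℕ} {R : Type v} [Ring R] [Algebra F R]
    (bar : (Fin n → ℤ) → Rˣ) (B : AddSubgroup (Fin n → ℤ)) : Submodule F R :=
  Submodule.span F ((fun a => (bar a : R)) '' B)

/-- A right `R`-module `M` is `F∗B`-torsion if every element of `M` is annihilated by a
nonzero element of `F∗B`. -/
def IsTorsionOverSub (F : Type u) [Field F] {n : ℕ} {R : Type v} [Ring R] [Algebra F R]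
    (bar : (Fin n → ℤ) → Rˣ) (B : AddSubgroup (Fin n → ℤ)) (M : Type*) [AddCommGroup M]
    [Module Rᵐᵒᵖ M] : Prop :=
  ∀ m : M, ∃ β ∈ tgaSpan F bar B, β ≠ 0 ∧ op β • m = 0

/-- The rank of a subgroup of the free abelian group `ℤⁿ`. -/
noncomputable def rk {n : ℕ} (B : AddSubgroup (Fin n → ℤ)) : ℕ :=
  Module.finrank ℤ B

/-- The Gelfand–Kirillov dimension (measured over `F`) of a finitely generated right module
over the twisted group algebra `F∗A`, via the Brookes–Groves characterization: it is the
supremum of the ranks of the subgroups `B ≤ A` such that `M` is not `F∗B`-torsion. -/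
noncomputable def gkTGA (F : Type u) [Field F] {n : ℕ} {R : Type v} [Ring R] [Algebra F R]
    (bar : (Fin n → ℤ) → Rˣ) (M : Type*) [AddCommGroup M] [Module Rᵐᵒᵖ M] : ℕ :=
  sSup { r : ℕ | ∃ B : AddSubgroup (Fin n → ℤ),
    ¬ IsTorsionOverSub F bar B M ∧ rk B = r }

/-- The subgroup `⟨x₁, …, x_r⟩` of `ℤⁿ` generated by the first `r` standard basis
vectors. -/
def stdSub (n r : ℕ) : AddSubgroup (Fin n → ℤ) where
  carrier := { x | ∀ i : Fin n, r ≤ (i : ℕ) → x i = 0 }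
  zero_mem' := fun i _ => rfl
  add_mem' := by
    intro a b ha hb i hi
    simp [ha i hi, hb i hi]
  neg_mem' := by
    intro a ha i hi
    simp [ha i hi]

/-- The set `C∖{0}` used below, where `C = F∗⟨x₁,…,x_r⟩`, is an Ore set in `F∗A`;
`IsOreLocalizationData` records that `φ : R →+* R'` is a right Ore localization of
`R = F∗A` at `S = C∖{0}`: elements of `S` become invertible, every element of `R'` is a
right fraction `φ(a)·φ(s)⁻¹`, and the kernel of `φ` is the `S`-torsion of `R`. -/
structure IsOreLocalizationData {R : Type u} [Ring R] {R' : Type v} [Ring R']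
    (C : Set R) (φ : R →+* R') : Prop where
  isUnit : ∀ s ∈ C, s ≠ 0 → IsUnit (φ s)
  surj : ∀ y : R', ∃ (a : R) (s : R), s ∈ C ∧ s ≠ 0 ∧ y = φ a * Ring.inverse (φ s)
  ker : ∀ a : R, φ a = 0 ↔ ∃ s ∈ C, s ≠ 0 ∧ a * s = 0

/-- `IsOreModuleLocalizationData C φ ψ` : the right `R'`-module `M'` together with
`ψ : M →+ M'` is the localization `M S⁻¹` of the right `R`-module `M` at `S = C∖{0}`:
`ψ` is `φ`-semilinear, every element of `M'` is a fraction `ψ(m)·φ(s)⁻¹`, and the kernel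
of `ψ` is the `S`-torsion submodule of `M`. -/
structure IsOreModuleLocalizationData {R : Type u} [Ring R] {R' : Type v} [Ring R']
    (C : Set R) (φ : R →+* R') {M : Type u} [AddCommGroup M] [Module Rᵐᵒᵖ M]
    {M' : Type v} [AddCommGroup M'] [Module R'ᵐᵒᵖ M'] (ψ : M →+ M') : Prop where
  semilinear : ∀ (a : R) (m : M), ψ (op a • m) = op (φ a) • ψ m
  surj : ∀ m' : M', ∃ (m : M) (s : R), s ∈ C ∧ s ≠ 0 ∧
    m' = op (Ring.inverse (φ s)) • ψ m
  ker : ∀ m : M, ψ m = 0 ↔ ∃ s ∈ C, s ≠ 0 ∧ op s • m = 0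

/-- The quotient division ring `D = F(x₁,…,x_r)` of `C = F∗⟨x₁,…,x_r⟩`, realized as the
set of fractions `φ(c)·φ(s)⁻¹` (`c, s ∈ C`, `s ≠ 0`) inside the localization `R'`. -/
def quotDivisionRing {R : Type u} [Ring R] {R' : Type v} [Ring R'] (C : Set R)
    (φ : R →+* R') : Set R' :=
  { y | ∃ c ∈ C, ∃ s ∈ C, s ≠ 0 ∧ y = φ c * Ring.inverse (φ s) }

/-!
Write `C = F∗⟨x₁,…,x_r⟩`. Since `gk(M) = r` and `⟨x₁,…,x_r,x_j⟩` has rank `r + 1`, the module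
`M` is torsion over `F∗⟨x₁,…,x_r,x_j⟩` for every `j > r`; so every `v ∈ MS⁻¹` is killed by a
nonzero `∑ₖ γₖ x_jᵏ` with `γₖ ∈ C`. Shifting this relation by powers of `x_j` and inverting its
extreme coefficients in `D` expresses every `v x_jᵐ` through finitely many consecutive ones.
As the monomials normalize `D`, induction over the directions `j = r + 1, …, n` puts all `v xᵗ`,
`t ∈ ⟨x_{r+1},…,x_n⟩`, into one finitely generated `D`-submodule, and `MS⁻¹` is the sum of
these orbits over finitely many generators of `M`. That the fractions over `C` form a ring rests
on the Ore condition in `C`, inherited from `F∗A` because `s x ∈ C` with `0 ≠ s ∈ C` forces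
`x ∈ C`. Finally `MS⁻¹ ≠ 0` exactly because `M` is not `C`-torsion.
-/
section Span

open Submodule

lemma op_smul_mem_span_image {A M : Type*} [Ring A] [AddCommGroup M] [Module Aᵐᵒᵖ M]
    {D : Subring A} {x : A} (hx : ∀ d ∈ D, ∃ d' ∈ D, d * x = x * d') {G : Set M} {w : M}
    (hw : w ∈ span D.op G) : op x • w ∈ span D.op ((op x • ·) '' G) := by
  induction hw using Submodule.span_induction with
  | mem g hg => exact subset_span ⟨g, hg, rfl⟩
  | zero => simp
  | add w₁ w₂ _ _ h₁ h₂ => rw [smul_add]; exact add_mem h₁ h₂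
  | smul a w _ hw =>
    obtain ⟨d', hd', hcomm⟩ := hx _ a.2
    have : op x • a • w = (⟨op d', hd'⟩ : D.op) • op x • w := by
      rw [Subring.smul_def, Subring.smul_def, ← mul_smul, ← mul_smul, ← op_unop (a : Aᵐᵒᵖ),
        ← op_mul, ← op_mul, hcomm]
    rw [this]
    exact smul_mem _ _ hw

lemma mem_span_image_erase_of_sum_smul_eq_zero {A M ι : Type*} [Ring A] [AddCommGroup M]
    [Module A M] [DecidableEq ι] {K : Finset ι} {c : ι → A} {w : ι → M}
    (hsum : ∑ i ∈ K, c i • w i = 0) {i₀ : ι} (hi₀ : i₀ ∈ K) {c' : A} (hc' : c' * c i₀ = 1) :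
    w i₀ ∈ span A (w '' ↑(K.erase i₀)) := by
  have hsolve : c i₀ • w i₀ = -∑ i ∈ K.erase i₀, c i • w i :=
    eq_neg_of_add_eq_zero_left ((Finset.add_sum_erase K _ hi₀).trans hsum)
  have hmem : c i₀ • w i₀ ∈ span A (w '' ↑(K.erase i₀)) := by
    rw [hsolve]
    exact neg_mem (sum_mem fun i hi => smul_mem _ _ (subset_span ⟨i, hi, rfl⟩))
  simpa [smul_smul, hc'] using smul_mem _ c' hmem

lemma mem_span_image_Ico_of_recurrence {A M : Type*} [Semiring A] [AddCommMonoid M]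
    [Module A M] (u : ℤ → M) (L : ℤ) (hup : ∀ s, u (s + L) ∈ span A (u '' Set.Ico s (s + L)))
    (hdown : ∀ s, u s ∈ span A (u '' Set.Ioc s (s + L))) (a m : ℤ) :
    u m ∈ span A (u '' Set.Ico a (a + L)) := by
  have hgrow : ∀ N : ℕ, ∀ k ∈ Set.Ico (a - N) (a + L + N),
      u k ∈ span A (u '' Set.Ico a (a + L)) := by
    intro N
    induction N with
    | zero => exact fun k hk => subset_span ⟨k, by simpa using hk, rfl⟩
    | succ N ih =>
      have hsub : ∀ S ⊆ Set.Ico (a - N) (a + L + N),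
          span A (u '' S) ≤ span A (u '' Set.Ico a (a + L)) :=
        fun S hS => span_le.2 (by rintro _ ⟨k, hk, rfl⟩; exact ih k (hS hk))
      intro k hk
      simp only [Set.mem_Ico, Nat.cast_succ] at hk
      by_cases hin : k ∈ Set.Ico (a - N) (a + L + N)
      · exact ih k hin
      rw [Set.mem_Ico] at hin
      rcases (by omega : k = a - N - 1 ∨ k = a + N + L) with rfl | rfl
      · refine hsub _ ?_ (hdown _)
        intro x hx
        simp only [Set.mem_Ioc, Set.mem_Ico] at hx ⊢
        omega
      · refine hsub _ ?_ (hup _)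
        intro x hx
        simp only [Set.mem_Ico] at hx ⊢
        omega
  exact hgrow ((a - m).toNat + (m - a - L + 1).toNat) m (by simp only [Set.mem_Ico]; omega)

lemma op_smul_mem_of_mem_span {A M : Type*} [Ring A] [AddCommGroup M] [Module Aᵐᵒᵖ M]
    {D : Subring A} {S : Set A} {N : Submodule D.op M} {w : M}
    (hS : ∀ x ∈ S, op x • w ∈ N) {y : A} (hy : y ∈ span D.op S) : op y • w ∈ N := by
  induction hy using Submodule.span_induction with
  | mem x hx => exact hS x hx
  | zero => simp
  | add y₁ y₂ _ _ h₁ h₂ => rw [op_add, add_smul]; exact N.add_mem h₁ h₂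
  | smul a y _ hy =>
    have : op (a • y) • w = a • op y • w := by
      rw [Subring.smul_def, Subring.smul_def, ← mul_smul]
      rfl
    rw [this]
    exact N.smul_mem a hy

end Span

section TwistedGroupAlgebra

variable {F : Type*} [Field F] {n : ℕ} {R : Type u} [Ring R] [Algebra F R]
  {bar : (Fin n → ℤ) → Rˣ} {τ : (Fin n → ℤ) → (Fin n → ℤ) → F}

lemma bar_mem_tgaSpan {B : AddSubgroup (Fin n → ℤ)} {a : Fin n → ℤ} (ha : a ∈ B) :
    (bar a : R) ∈ tgaSpan F bar B :=
  Submodule.subset_span ⟨a, ha, rfl⟩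

namespace IsTwistedGroupAlgebra

noncomputable def basis (h : IsTwistedGroupAlgebra F R bar τ) : Module.Basis (Fin n → ℤ) F R :=
  Module.Basis.mk (v := fun a => (bar a : R))
    (by
      rw [linearIndependent_iff]
      intro l hl
      obtain ⟨c₀, -, huniq⟩ := h.repr_unique 0
      rw [Finsupp.linearCombination_apply] at hl
      rw [huniq l hl.symm, ← huniq 0 (by simp)])
    (by
      rintro x -
      obtain ⟨c, rfl, -⟩ := h.repr_unique x
      exact Submodule.sum_mem _ fun a _ =>
        Submodule.smul_mem _ _ (Submodule.subset_span ⟨a, rfl⟩))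

@[simp]
lemma basis_apply (h : IsTwistedGroupAlgebra F R bar τ) (a : Fin n → ℤ) :
    h.basis a = (bar a : R) := by
  simp [basis]

lemma repr_mul (h : IsTwistedGroupAlgebra F R bar τ) (x y : R) :
    h.basis.repr (x * y) = ∑ a ∈ (h.basis.repr x).support, ∑ c ∈ (h.basis.repr y).support,
      Finsupp.single (a + c) (h.basis.repr x a * h.basis.repr y c * τ a c) := by
  conv_lhs => rw [← h.basis.linearCombination_repr x, ← h.basis.linearCombination_repr y]
  simp only [Finsupp.linearCombination_apply, Finsupp.sum, Finset.sum_mul_sum, map_sum]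
  refine Finset.sum_congr rfl fun a _ => Finset.sum_congr rfl fun c _ => ?_
  rw [basis_apply, basis_apply, smul_mul_smul_comm, h.mul_bar, smul_smul, ← basis_apply h,
    map_smul, h.basis.repr_self, Finsupp.smul_single_one]

lemma repr_mul_apply_of_uniqueAdd (h : IsTwistedGroupAlgebra F R bar τ) {x y : R}
    {a₀ c₀ : Fin n → ℤ}
    (ha₀ : a₀ ∈ (h.basis.repr x).support) (hc₀ : c₀ ∈ (h.basis.repr y).support)
    (hu : UniqueAdd (h.basis.repr x).support (h.basis.repr y).support a₀ c₀) :
    h.basis.repr (x * y) (a₀ + c₀) = h.basis.repr x a₀ * h.basis.repr y c₀ * τ a₀ c₀ := by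
  classical
  rw [repr_mul, Finsupp.finsetSum_apply, Finset.sum_eq_single a₀ _ (absurd ha₀),
    Finsupp.finsetSum_apply, Finset.sum_eq_single c₀ _ (absurd hc₀), Finsupp.single_eq_same]
  · intro c hc hne
    exact Finsupp.single_eq_of_ne fun hadd => hne (hu ha₀ hc hadd.symm).2
  · intro a ha hne
    rw [Finsupp.finsetSum_apply]
    exact Finset.sum_eq_zero fun c hc =>
      Finsupp.single_eq_of_ne fun hadd => hne (hu ha hc hadd.symm).1

/-- `ℤⁿ` has unique sums, so the extreme coefficient of a product cannot cancel. -/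
lemma mul_ne_zero (h : IsTwistedGroupAlgebra F R bar τ) {x y : R} (hx : x ≠ 0) (hy : y ≠ 0) :
    x * y ≠ 0 := by
  have hsupp : ∀ {z : R}, z ≠ 0 → (h.basis.repr z).support.Nonempty := fun hz =>
    Finsupp.support_nonempty_iff.2 (by simpa using hz)
  obtain ⟨a₀, ha₀, c₀, hc₀, hu⟩ := UniqueSums.uniqueAdd_of_nonempty (hsupp hx) (hsupp hy)
  intro hxy
  have hcoeff := h.repr_mul_apply_of_uniqueAdd ha₀ hc₀ hu
  rw [hxy, map_zero, Finsupp.coe_zero, Pi.zero_apply] at hcoeff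
  exact _root_.mul_ne_zero (_root_.mul_ne_zero (Finsupp.mem_support_iff.1 ha₀)
    (Finsupp.mem_support_iff.1 hc₀)) (h.τ_ne_zero a₀ c₀) hcoeff.symm

lemma one_ne_zero (h : IsTwistedGroupAlgebra F R bar τ) : (1 : R) ≠ 0 := by
  intro h10
  exact h.basis.ne_zero 0 (by rw [basis_apply, ← mul_one (bar 0 : R), h10, mul_zero])

lemma bar_zero (h : IsTwistedGroupAlgebra F R bar τ) : (bar 0 : R) = τ 0 0 • 1 := by
  have hsq : (bar 0 : R) * bar 0 = τ 0 0 • (bar 0 : R) := by simpa using h.mul_bar 0 0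
  calc (bar 0 : R) = (bar 0 : R) * bar 0 * ↑(bar 0)⁻¹ := by simp [mul_assoc]
    _ = τ 0 0 • 1 := by rw [hsq, smul_mul_assoc, Units.mul_inv]

lemma algebraMap_mem_tgaSpan (h : IsTwistedGroupAlgebra F R bar τ)
    (B : AddSubgroup (Fin n → ℤ)) (f : F) :
    algebraMap F R f ∈ tgaSpan F bar B := by
  have h1 : algebraMap F R f = (f * (τ 0 0)⁻¹) • (bar 0 : R) := by
    rw [h.bar_zero, smul_smul, mul_assoc, inv_mul_cancel₀ (h.τ_ne_zero 0 0), mul_one,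
      Algebra.algebraMap_eq_smul_one]
  rw [h1]
  exact Submodule.smul_mem _ _ (bar_mem_tgaSpan B.zero_mem)

lemma one_mem_tgaSpan (h : IsTwistedGroupAlgebra F R bar τ) (B : AddSubgroup (Fin n → ℤ)) :
    (1 : R) ∈ tgaSpan F bar B := by
  simpa using h.algebraMap_mem_tgaSpan B 1

lemma mul_mem_tgaSpan (h : IsTwistedGroupAlgebra F R bar τ) {B : AddSubgroup (Fin n → ℤ)}
    {x y : R} (hx : x ∈ tgaSpan F bar B) (hy : y ∈ tgaSpan F bar B) :
    x * y ∈ tgaSpan F bar B := by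
  have hle : tgaSpan F bar B * tgaSpan F bar B ≤ tgaSpan F bar B := by
    rw [tgaSpan, Submodule.span_mul_span, Submodule.span_le]
    rintro _ ⟨_, ⟨a, ha, rfl⟩, _, ⟨c, hc, rfl⟩, rfl⟩
    change (bar a : R) * bar c ∈ tgaSpan F bar B
    rw [h.mul_bar]
    exact Submodule.smul_mem _ _ (bar_mem_tgaSpan (B.add_mem ha hc))
  exact hle (Submodule.mul_mem_mul hx hy)

lemma bar_mul_bar_comm (h : IsTwistedGroupAlgebra F R bar τ) (a c : Fin n → ℤ) :
    (bar a : R) * bar c = (τ a c * (τ c a)⁻¹) • ((bar c : R) * bar a) := by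
  rw [h.mul_bar a c, h.mul_bar c a, smul_smul, add_comm a c, mul_assoc,
    inv_mul_cancel₀ (h.τ_ne_zero c a), mul_one]

lemma bar_inv_conj_mem_tgaSpan (h : IsTwistedGroupAlgebra F R bar τ)
    {B : AddSubgroup (Fin n → ℤ)} (t : Fin n → ℤ) {x : R} (hx : x ∈ tgaSpan F bar B) :
    ↑(bar t)⁻¹ * x * (bar t : R) ∈ tgaSpan F bar B := by
  let conj : R →ₗ[F] R :=
    (LinearMap.mulLeft F (↑(bar t)⁻¹ : R)).comp (LinearMap.mulRight F (bar t : R))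
  have hle : tgaSpan F bar B ≤ (tgaSpan F bar B).comap conj := by
    refine Submodule.span_le.2 ?_
    rintro _ ⟨c, hc, rfl⟩
    change ↑(bar t)⁻¹ * ((bar c : R) * bar t) ∈ tgaSpan F bar B
    rw [h.bar_mul_bar_comm, mul_smul_comm, Units.inv_mul_cancel_left]
    exact Submodule.smul_mem _ _ (bar_mem_tgaSpan hc)
  simpa [conj, mul_assoc] using hle hx

open Classical in
noncomputable def proj (h : IsTwistedGroupAlgebra F R bar τ) (B : AddSubgroup (Fin n → ℤ)) :
    R →ₗ[F] R :=
  h.basis.constr F fun a => if a ∈ B then (bar a : R) else 0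

open Classical in
lemma proj_bar (h : IsTwistedGroupAlgebra F R bar τ) (B : AddSubgroup (Fin n → ℤ))
    (a : Fin n → ℤ) : h.proj B (bar a) = if a ∈ B then (bar a : R) else 0 := by
  conv_lhs => rw [← basis_apply h]
  rw [proj, Module.Basis.constr_basis]

lemma proj_mem_tgaSpan (h : IsTwistedGroupAlgebra F R bar τ) (B : AddSubgroup (Fin n → ℤ))
    (x : R) : h.proj B x ∈ tgaSpan F bar B := by
  have hrange : LinearMap.range (h.proj B) ≤ tgaSpan F bar B := by
    rw [proj, Module.Basis.constr_range, Submodule.span_le]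
    rintro _ ⟨a, rfl⟩
    dsimp only
    split_ifs with ha
    exacts [bar_mem_tgaSpan ha, Submodule.zero_mem _]
  exact hrange (LinearMap.mem_range_self _ x)

lemma proj_eq_self (h : IsTwistedGroupAlgebra F R bar τ) {B : AddSubgroup (Fin n → ℤ)} {x : R}
    (hx : x ∈ tgaSpan F bar B) : h.proj B x = x :=
  LinearMap.eqOn_span' (f := h.proj B) (g := LinearMap.id)
    (by rintro _ ⟨a, ha, rfl⟩; simp [proj_bar, show a ∈ B from ha]) hx

/-- Holds because `a + c ∈ B ↔ c ∈ B` for `a ∈ B`. -/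
lemma proj_mul_of_mem (h : IsTwistedGroupAlgebra F R bar τ) {B : AddSubgroup (Fin n → ℤ)}
    {s : R} (hs : s ∈ tgaSpan F bar B) (x : R) : h.proj B (s * x) = s * h.proj B x := by
  induction hs using Submodule.span_induction generalizing x with
  | mem _ hmem =>
    obtain ⟨a, ha, rfl⟩ := hmem
    replace ha : a ∈ B := ha
    have hext : (h.proj B).comp (LinearMap.mulLeft F (bar a : R))
        = (LinearMap.mulLeft F (bar a : R)).comp (h.proj B) := by
      refine h.basis.ext fun c => ?_
      have hac : a + c ∈ B ↔ c ∈ B := add_mem_cancel_left ha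
      by_cases hc : c ∈ B
      · simp [proj_bar, hc, hac.2 hc, h.mul_bar]
      · simp [proj_bar, hc, mt hac.1 hc, h.mul_bar]
    exact LinearMap.congr_fun hext x
  | zero => simp
  | add s₁ s₂ _ _ h₁ h₂ => rw [add_mul, map_add, h₁, h₂, add_mul]
  | smul f s _ hs => rw [smul_mul_assoc, map_smul, hs, smul_mul_assoc]

lemma mem_tgaSpan_of_mul_mem (h : IsTwistedGroupAlgebra F R bar τ)
    {B : AddSubgroup (Fin n → ℤ)} {s x : R} (hs : s ∈ tgaSpan F bar B) (hs0 : s ≠ 0)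
    (hsx : s * x ∈ tgaSpan F bar B) : x ∈ tgaSpan F bar B := by
  have hkill : s * (x - h.proj B x) = 0 := by
    rw [mul_sub, ← h.proj_mul_of_mem hs, h.proj_eq_self hsx, sub_self]
  have hx : x - h.proj B x = 0 := by
    by_contra hne
    exact h.mul_ne_zero hs0 hne hkill
  rw [sub_eq_zero.1 hx]
  exact h.proj_mem_tgaSpan B x

lemma exists_eq_sum_mul_bar_single (h : IsTwistedGroupAlgebra F R bar τ)
    {B B' : AddSubgroup (Fin n → ℤ)} (j : Fin n) (hB' : ∀ a ∈ B', a - Pi.single j (a j) ∈ B)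
    {β : R} (hβ : β ∈ tgaSpan F bar B') :
    ∃ γ : ℤ →₀ R, (∀ k, γ k ∈ tgaSpan F bar B) ∧
      β = γ.sum fun k c => c * bar (Pi.single j k) := by
  classical
  induction hβ using Submodule.span_induction with
  | mem _ hmem =>
    obtain ⟨a, ha, rfl⟩ := hmem
    set b := a - Pi.single j (a j)
    refine ⟨Finsupp.single (a j) ((τ b (Pi.single j (a j)))⁻¹ • (bar b : R)), fun k => ?_, ?_⟩
    · rw [Finsupp.single_apply]
      split_ifs
      exacts [Submodule.smul_mem _ _ (bar_mem_tgaSpan (hB' a ha)), Submodule.zero_mem _]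
    · rw [Finsupp.sum_single_index (zero_mul _), smul_mul_assoc, h.mul_bar, sub_add_cancel,
        smul_smul, inv_mul_cancel₀ (h.τ_ne_zero _ _), one_smul]
  | zero => exact ⟨0, fun _ => Submodule.zero_mem _, by simp⟩
  | add x y _ _ hx hy =>
    obtain ⟨γ₁, hγ₁, rfl⟩ := hx
    obtain ⟨γ₂, hγ₂, rfl⟩ := hy
    exact ⟨γ₁ + γ₂, fun k => Submodule.add_mem _ (hγ₁ k) (hγ₂ k),
      (Finsupp.sum_add_index' (fun _ => zero_mul _) fun _ _ _ => add_mul _ _ _).symm⟩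
  | smul f x _ hx =>
    obtain ⟨γ, hγ, rfl⟩ := hx
    refine ⟨f • γ, fun k => Submodule.smul_mem _ _ (hγ k), ?_⟩
    rw [Finsupp.sum_smul_index' fun _ => zero_mul _, Finsupp.smul_sum]
    simp only [smul_mul_assoc]

end IsTwistedGroupAlgebra

namespace IsOreLocalizationData

variable {R' : Type v} [Ring R'] {φ : R →+* R'} {B : AddSubgroup (Fin n → ℤ)}
  {M' : Type*} [AddCommGroup M'] [Module R'ᵐᵒᵖ M']

/-- The right Ore condition inside `F∗B`, inherited from the localization of `F∗A`. -/
lemma exists_mul_eq_mul (h : IsTwistedGroupAlgebra F R bar τ)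
    (hφ : IsOreLocalizationData (tgaSpan F bar B : Set R) φ) {c s : R}
    (hc : c ∈ tgaSpan F bar B) (hs : s ∈ tgaSpan F bar B) (hs0 : s ≠ 0) :
    ∃ u₁ ∈ tgaSpan F bar B, ∃ u₂ ∈ tgaSpan F bar B, u₂ ≠ 0 ∧ c * u₂ = s * u₁ := by
  obtain ⟨a, t, ht, ht0, hfrac⟩ := hφ.surj (Ring.inverse (φ s) * φ c)
  have hφeq : φ (c * t - s * a) = 0 := by
    rw [Ring.inverse_mul_eq_iff_eq_mul _ _ _ (hφ.isUnit s hs hs0)] at hfrac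
    rw [map_sub, map_mul, map_mul, hfrac, mul_assoc,
      Ring.inverse_mul_cancel_right _ _ (hφ.isUnit t ht ht0), sub_self]
  obtain ⟨u, hu, hu0, hkill⟩ := (hφ.ker _).1 hφeq
  have hcomm : c * (t * u) = s * (a * u) := by
    rw [← mul_assoc, ← mul_assoc, ← sub_eq_zero, ← sub_mul, hkill]
  have htu : t * u ∈ tgaSpan F bar B := h.mul_mem_tgaSpan ht hu
  refine ⟨a * u, h.mem_tgaSpan_of_mul_mem hs hs0 ?_, t * u, htu, h.mul_ne_zero ht0 hu0, hcomm⟩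
  rw [← hcomm]
  exact h.mul_mem_tgaSpan hc htu

def quotDivisionSubring (h : IsTwistedGroupAlgebra F R bar τ)
    (hφ : IsOreLocalizationData (tgaSpan F bar B : Set R) φ) : Subring R' where
  carrier := quotDivisionRing (tgaSpan F bar B : Set R) φ
  zero_mem' := ⟨0, Submodule.zero_mem _, 1, h.one_mem_tgaSpan B, h.one_ne_zero, by simp⟩
  one_mem' := ⟨1, h.one_mem_tgaSpan B, 1, h.one_mem_tgaSpan B, h.one_ne_zero, by simp⟩
  add_mem' := by
    rintro _ _ ⟨c₁, hc₁, s₁, hs₁, hs₁0, rfl⟩ ⟨c₂, hc₂, s₂, hs₂, hs₂0, rfl⟩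
    obtain ⟨u₁, hu₁, u₂, hu₂, hu₂0, hcommon⟩ := hφ.exists_mul_eq_mul h hs₂ hs₁ hs₁0
    have hw0 : s₁ * u₁ ≠ 0 := hcommon ▸ h.mul_ne_zero hs₂0 hu₂0
    have hw : s₁ * u₁ ∈ tgaSpan F bar B := h.mul_mem_tgaSpan hs₁ hu₁
    have hu₁0 : u₁ ≠ 0 := by rintro rfl; exact hw0 (mul_zero _)
    have hexpand : ∀ {c s u : R}, s ∈ tgaSpan F bar B → s ≠ 0 → u ∈ tgaSpan F bar B →
        u ≠ 0 → φ c * Ring.inverse (φ s) = φ (c * u) * Ring.inverse (φ (s * u)) := by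
      intro c s u hs hs0 hu hu0
      rw [map_mul, map_mul, Ring.inverse_mul (Or.inl (hφ.isUnit s hs hs0)), ← mul_assoc,
        Ring.mul_inverse_cancel_right _ _ (hφ.isUnit u hu hu0)]
    refine ⟨c₁ * u₁ + c₂ * u₂, Submodule.add_mem _ (h.mul_mem_tgaSpan hc₁ hu₁)
      (h.mul_mem_tgaSpan hc₂ hu₂), s₁ * u₁, hw, hw0, ?_⟩
    rw [hexpand hs₁ hs₁0 hu₁ hu₁0, hexpand hs₂ hs₂0 hu₂ hu₂0, hcommon, ← add_mul, ← map_add]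
  mul_mem' := by
    rintro _ _ ⟨c₁, hc₁, s₁, hs₁, hs₁0, rfl⟩ ⟨c₂, hc₂, s₂, hs₂, hs₂0, rfl⟩
    obtain ⟨u₁, hu₁, u₂, hu₂, hu₂0, hcomm⟩ := hφ.exists_mul_eq_mul h hc₂ hs₁ hs₁0
    have hswap : Ring.inverse (φ s₁) * φ c₂ = φ u₁ * Ring.inverse (φ u₂) := by
      rw [Ring.inverse_mul_eq_iff_eq_mul _ _ _ (hφ.isUnit s₁ hs₁ hs₁0), ← mul_assoc,
        Ring.eq_mul_inverse_iff_mul_eq _ _ _ (hφ.isUnit u₂ hu₂ hu₂0), ← map_mul, ← map_mul,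
        hcomm]
    refine ⟨c₁ * u₁, h.mul_mem_tgaSpan hc₁ hu₁, s₂ * u₂, h.mul_mem_tgaSpan hs₂ hu₂,
      h.mul_ne_zero hs₂0 hu₂0, ?_⟩
    rw [map_mul, map_mul, Ring.inverse_mul (Or.inl (hφ.isUnit s₂ hs₂ hs₂0)),
      mul_assoc (φ c₁), ← mul_assoc _ (φ c₂), hswap]
    simp only [mul_assoc]
  neg_mem' := by
    rintro _ ⟨c, hc, s, hs, hs0, rfl⟩
    exact ⟨-c, Submodule.neg_mem _ hc, s, hs, hs0, by rw [map_neg, neg_mul]⟩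

lemma map_mem_quotDivisionSubring (h : IsTwistedGroupAlgebra F R bar τ)
    (hφ : IsOreLocalizationData (tgaSpan F bar B : Set R) φ) {c : R}
    (hc : c ∈ tgaSpan F bar B) : φ c ∈ hφ.quotDivisionSubring h :=
  ⟨c, hc, 1, h.one_mem_tgaSpan B, h.one_ne_zero, by simp⟩

lemma inverse_map_mem_quotDivisionSubring (h : IsTwistedGroupAlgebra F R bar τ)
    (hφ : IsOreLocalizationData (tgaSpan F bar B : Set R) φ) {s : R}
    (hs : s ∈ tgaSpan F bar B) (hs0 : s ≠ 0) : Ring.inverse (φ s) ∈ hφ.quotDivisionSubring h :=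
  ⟨1, h.one_mem_tgaSpan B, s, hs, hs0, by simp⟩

lemma bar_inv_conj_mem_quotDivisionSubring (h : IsTwistedGroupAlgebra F R bar τ)
    (hφ : IsOreLocalizationData (tgaSpan F bar B : Set R) φ) (t : Fin n → ℤ) {d : R'}
    (hd : d ∈ hφ.quotDivisionSubring h) :
    φ ↑(bar t)⁻¹ * d * φ (bar t) ∈ hφ.quotDivisionSubring h := by
  obtain ⟨c, hc, s, hs, hs0, rfl⟩ := hd
  have hs' : ↑(bar t)⁻¹ * s * (bar t : R) ∈ tgaSpan F bar B := h.bar_inv_conj_mem_tgaSpan t hs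
  have hs'0 : ↑(bar t)⁻¹ * s * (bar t : R) ≠ 0 := by simpa [mul_assoc] using hs0
  refine ⟨_, h.bar_inv_conj_mem_tgaSpan t hc, _, hs', hs'0, ?_⟩
  have hcancel : φ (bar t) * φ ↑(bar t)⁻¹ = 1 := by rw [← map_mul, Units.mul_inv, map_one]
  rw [Ring.eq_mul_inverse_iff_mul_eq _ _ _ (hφ.isUnit _ hs' hs'0)]
  simp only [map_mul, mul_assoc]
  rw [← mul_assoc (φ (bar t)), hcancel, one_mul,
    Ring.inverse_mul_cancel_left _ _ (hφ.isUnit s hs hs0)]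

lemma exists_mul_map_bar_eq (h : IsTwistedGroupAlgebra F R bar τ)
    (hφ : IsOreLocalizationData (tgaSpan F bar B : Set R) φ) (t : Fin n → ℤ) {d : R'}
    (hd : d ∈ hφ.quotDivisionSubring h) :
    ∃ d' ∈ hφ.quotDivisionSubring h, d * φ (bar t) = φ (bar t) * d' := by
  refine ⟨_, hφ.bar_inv_conj_mem_quotDivisionSubring h t hd, ?_⟩
  rw [← mul_assoc, ← mul_assoc, ← map_mul, Units.mul_inv, map_one, one_mul]

/-- Multiply the annihilator `∑ γₖ xⱼᵏ` of `v` on the right by `xⱼˢ` and move each coefficient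
past its monomial. -/
lemma exists_shifted_relation (h : IsTwistedGroupAlgebra F R bar τ)
    (hφ : IsOreLocalizationData (tgaSpan F bar B : Set R) φ) (j : Fin n) (γ : ℤ →₀ R)
    (hγ : ∀ k, γ k ∈ tgaSpan F bar B) {v : M'}
    (hv : op (φ (γ.sum fun k c => c * bar (Pi.single j k))) • v = 0) (s : ℤ) :
    ∃ c : ℤ → (hφ.quotDivisionSubring h).op, (∀ k ∈ γ.support, ∃ c', c' * c k = 1) ∧
      ∑ k ∈ γ.support, c k • op (φ (bar (Pi.single j (k + s)))) • v = 0 := by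
  set γ' : ℤ → R := fun k => τ (Pi.single j k) (Pi.single j s) •
    (↑(bar (Pi.single j (k + s)))⁻¹ * γ k * bar (Pi.single j (k + s)))
  have hγ'C : ∀ k, γ' k ∈ tgaSpan F bar B := fun k =>
    Submodule.smul_mem _ _ (h.bar_inv_conj_mem_tgaSpan _ (hγ k))
  have hγ'0 : ∀ k ∈ γ.support, γ' k ≠ 0 := fun k hk => by
    simpa [γ', h.τ_ne_zero, mul_assoc] using Finsupp.mem_support_iff.1 hk
  have hmove : ∀ k, γ k * bar (Pi.single j k) * bar (Pi.single j s)
      = bar (Pi.single j (k + s)) * γ' k := fun k => by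
    simp only [γ', mul_assoc, h.mul_bar, ← Pi.single_add, mul_smul_comm,
      Units.mul_inv_cancel_left]
  refine ⟨fun k => ⟨op (φ (γ' k)), hφ.map_mem_quotDivisionSubring h (hγ'C k)⟩,
    fun k hk => ⟨⟨op (Ring.inverse (φ (γ' k))),
      hφ.inverse_map_mem_quotDivisionSubring h (hγ'C k) (hγ'0 k hk)⟩, ?_⟩, ?_⟩
  · ext1
    simp [← op_mul, Ring.mul_inverse_cancel _ (hφ.isUnit _ (hγ'C k) (hγ'0 k hk))]
  · have hprod : (γ.sum fun k c => c * bar (Pi.single j k)) * bar (Pi.single j s)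
        = ∑ k ∈ γ.support, bar (Pi.single j (k + s)) * γ' k := by
      rw [Finsupp.sum, Finset.sum_mul]
      exact Finset.sum_congr rfl fun k _ => hmove k
    have hzero : op (φ ((γ.sum fun k c => c * bar (Pi.single j k)) * bar (Pi.single j s))) • v
        = 0 := by
      rw [map_mul, op_mul, mul_smul, hv, smul_zero]
    rw [hprod, map_sum, Finset.op_sum, Finset.sum_smul] at hzero
    rw [← hzero]
    refine Finset.sum_congr rfl fun k _ => ?_
    rw [Subring.smul_def, map_mul, op_mul, mul_smul]

lemma exists_finset_forall_bar_single_smul_mem_span (h : IsTwistedGroupAlgebra F R bar τ)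
    (hφ : IsOreLocalizationData (tgaSpan F bar B : Set R) φ) {B' : AddSubgroup (Fin n → ℤ)}
    (j : Fin n) (hB' : ∀ a ∈ B', a - Pi.single j (a j) ∈ B) {β : R}
    (hβ : β ∈ tgaSpan F bar B') (hβ0 : β ≠ 0) {v : M'} (hv : op (φ β) • v = 0) :
    ∃ G : Finset M', ∀ m : ℤ,
      op (φ (bar (Pi.single j m))) • v ∈ Submodule.span (hφ.quotDivisionSubring h).op ↑G := by
  classical
  obtain ⟨γ, hγ, rfl⟩ := h.exists_eq_sum_mul_bar_single j hB' hβ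
  have hK : γ.support.Nonempty :=
    Finsupp.support_nonempty_iff.2 (by rintro rfl; simp at hβ0)
  set u : ℤ → M' := fun m => op (φ (bar (Pi.single j m))) • v
  set a := γ.support.min' hK
  set b := γ.support.max' hK
  have hsolve : ∀ s, ∀ k₀ ∈ γ.support, u (k₀ + s) ∈
      Submodule.span (hφ.quotDivisionSubring h).op
        ((fun k => u (k + s)) '' ↑(γ.support.erase k₀)) := by
    intro s k₀ hk₀
    obtain ⟨c, hunit, hsum⟩ := hφ.exists_shifted_relation h j γ hγ hv s
    obtain ⟨c', hc'⟩ := hunit k₀ hk₀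
    exact mem_span_image_erase_of_sum_smul_eq_zero hsum hk₀ hc'
  have hbounds : ∀ k ∈ γ.support, a ≤ k ∧ k ≤ b := fun k hk =>
    ⟨γ.support.min'_le k hk, γ.support.le_max' k hk⟩
  refine ⟨(Finset.Ico a b).image u, fun m => ?_⟩
  rw [Finset.coe_image, Finset.coe_Ico]
  convert mem_span_image_Ico_of_recurrence u (b - a) (fun s => ?_) (fun s => ?_) a m using 4
  · ring
  · convert Submodule.span_mono ?_ (hsolve (s - a) b (γ.support.max'_mem hK)) using 2
    · ring_nf
    · rintro _ ⟨k, hk, rfl⟩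
      obtain ⟨hkb, hk⟩ := Finset.mem_erase.1 hk
      have hab := hbounds k hk
      exact ⟨k + (s - a), by simp only [Set.mem_Ico]; omega, rfl⟩
  · convert Submodule.span_mono ?_ (hsolve (s - a) a (γ.support.min'_mem hK)) using 2
    · ring_nf
    · rintro _ ⟨k, hk, rfl⟩
      obtain ⟨hka, hk⟩ := Finset.mem_erase.1 hk
      have hab := hbounds k hk
      exact ⟨k + (s - a), by simp only [Set.mem_Ioc]; omega, rfl⟩

/-- `R'` is a right `D`-module here, so this says `y = ∑ φ(xᵗ) dₜ` with `t ∈ T`, `dₜ ∈ D`. -/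
lemma mem_span_image_map_bar (h : IsTwistedGroupAlgebra F R bar τ)
    (hφ : IsOreLocalizationData (tgaSpan F bar B : Set R) φ) {T : Set (Fin n → ℤ)}
    (hBT : ∀ e, ∃ b ∈ B, ∃ t ∈ T, e = b + t) (y : R') :
    y ∈ Submodule.span (hφ.quotDivisionSubring h).op ((fun t => φ (bar t)) '' T) := by
  obtain ⟨a, s, hs, hs0, rfl⟩ := hφ.surj y
  have hmonomial : ∀ (f : F) (e : Fin n → ℤ), φ (f • (bar e : R)) * Ring.inverse (φ s) ∈
      Submodule.span (hφ.quotDivisionSubring h).op ((fun t => φ (bar t)) '' T) := by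
    intro f e
    obtain ⟨b, hb, t, ht, rfl⟩ := hBT e
    have hc : (f * (τ b t)⁻¹) • (bar b : R) ∈ tgaSpan F bar B :=
      Submodule.smul_mem _ _ (bar_mem_tgaSpan hb)
    obtain ⟨d, hd, hcomm⟩ := hφ.exists_mul_map_bar_eq h t (hφ.map_mem_quotDivisionSubring h hc)
    have hsplit : f • (bar (b + t) : R) = (f * (τ b t)⁻¹) • (bar b : R) * bar t := by
      rw [smul_mul_assoc, h.mul_bar, smul_smul, mul_assoc, inv_mul_cancel₀ (h.τ_ne_zero b t),
        mul_one]
    have hd' : op (d * Ring.inverse (φ s)) ∈ (hφ.quotDivisionSubring h).op :=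
      Subring.mem_op.2 (Subring.mul_mem _ hd (hφ.inverse_map_mem_quotDivisionSubring h hs hs0))
    rw [hsplit, map_mul, hcomm, mul_assoc]
    exact Submodule.smul_mem _ (⟨_, hd'⟩ : (hφ.quotDivisionSubring h).op)
      (Submodule.subset_span ⟨t, ht, rfl⟩)
  rw [← h.basis.linearCombination_repr a, Finsupp.linearCombination_apply, Finsupp.sum,
    map_sum, Finset.sum_mul]
  exact Submodule.sum_mem _ fun e _ => by simpa using hmonomial (h.basis.repr a e) e

/-- Induction down from `i = n`, splitting `xᵗ = xᵢ^{tᵢ} xᵗ' λ` with `t'` supported on the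
coordinates `> i` and `λ ∈ F`. -/
lemma exists_finset_forall_bar_smul_mem_span (h : IsTwistedGroupAlgebra F R bar τ)
    (hφ : IsOreLocalizationData (tgaSpan F bar B : Set R) φ) {i : ℕ}
    (hdir : ∀ j : Fin n, i ≤ (j : ℕ) → ∀ v : M', ∃ G : Finset M', ∀ m : ℤ,
      op (φ (bar (Pi.single j m))) • v ∈ Submodule.span (hφ.quotDivisionSubring h).op ↑G)
    (v : M') :
    ∃ G : Finset M', ∀ t : Fin n → ℤ, (∀ j : Fin n, (j : ℕ) < i → t j = 0) →
      op (φ (bar t)) • v ∈ Submodule.span (hφ.quotDivisionSubring h).op ↑G := by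
  classical
  induction hk : n - i generalizing i v with
  | zero =>
    refine ⟨{op (φ (bar 0)) • v}, fun t ht => ?_⟩
    obtain rfl : t = 0 := funext fun j => ht j (by omega)
    exact Submodule.subset_span (Finset.mem_singleton_self _)
  | succ k ih =>
    set j : Fin n := ⟨i, by omega⟩
    obtain ⟨G₁, hG₁⟩ := hdir j le_rfl v
    choose G₂ hG₂ using fun g : M' => ih (i := i + 1) (fun j' hj' => hdir j' (by omega)) g
      (by omega)
    refine ⟨G₁.biUnion G₂, fun t ht => ?_⟩
    set t' := t - Pi.single j (t j)
    have ht' : ∀ j' : Fin n, (j' : ℕ) < i + 1 → t' j' = 0 := by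
      intro j' hj'
      rcases eq_or_ne j' j with rfl | hne
      · simp [t']
      · have hji : (j' : ℕ) ≠ i := fun hji => hne (Fin.ext hji)
        simp [t', hne, ht j' (by omega)]
    have hsplit : (bar t : R) = bar (Pi.single j (t j)) * bar t' *
        algebraMap F R (τ (Pi.single j (t j)) t')⁻¹ := by
      rw [Algebra.algebraMap_eq_smul_one, mul_smul_one, h.mul_bar, smul_smul,
        inv_mul_cancel₀ (h.τ_ne_zero _ _), one_smul, add_sub_cancel]
    have hscalar := hφ.map_mem_quotDivisionSubring h
      (h.algebraMap_mem_tgaSpan B (τ (Pi.single j (t j)) t')⁻¹)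
    have hmove : op (φ (bar t')) • op (φ (bar (Pi.single j (t j)))) • v ∈
        Submodule.span (hφ.quotDivisionSubring h).op ↑(G₁.biUnion G₂) := by
      refine Submodule.span_le.2 ?_ (op_smul_mem_span_image
        (fun d hd => hφ.exists_mul_map_bar_eq h t' hd) (hG₁ (t j)))
      rintro _ ⟨g, hg, rfl⟩
      exact Submodule.span_mono (Finset.coe_subset.2 (Finset.subset_biUnion_of_mem G₂ hg))
        (hG₂ g t' ht')
    rw [hsplit, map_mul, map_mul, op_mul, op_mul, mul_smul, mul_smul]
    exact Submodule.smul_mem _ (⟨_, hscalar⟩ : (hφ.quotDivisionSubring h).op) hmove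

end IsOreLocalizationData

def coordSub (n : ℕ) (s : Finset (Fin n)) : AddSubgroup (Fin n → ℤ) where
  carrier := {x | ∀ i ∉ s, x i = 0}
  zero_mem' := fun _ _ => rfl
  add_mem' := fun ha hb i hi => by simp [ha i hi, hb i hi]
  neg_mem' := fun ha i hi => by simp [ha i hi]

def coordSubEquiv (s : Finset (Fin n)) : coordSub n s ≃+ (s → ℤ) where
  toFun x i := (x : Fin n → ℤ) i
  invFun f := ⟨fun i => if hi : i ∈ s then f ⟨i, hi⟩ else 0, fun _ hi => dif_neg hi⟩
  left_inv := by
    rintro ⟨x, hx⟩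
    ext i
    by_cases hi : i ∈ s
    · simp [hi]
    · simp [hi, hx i hi]
  right_inv f := funext fun i => dif_pos i.2
  map_add' _ _ := rfl

lemma rk_coordSub (s : Finset (Fin n)) : rk (coordSub n s) = s.card := by
  rw [rk, LinearEquiv.finrank_eq (coordSubEquiv s).toIntLinearEquiv,
    Module.finrank_fintype_fun_eq_card, Fintype.card_coe]

lemma rk_le_gkTGA {M : Type*} [AddCommGroup M] [Module Rᵐᵒᵖ M] {B : AddSubgroup (Fin n → ℤ)}
    (hB : ¬ IsTorsionOverSub F bar B M) : rk B ≤ gkTGA F bar M := by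
  refine le_csSup ⟨n, ?_⟩ ⟨B, hB, rfl⟩
  rintro _ ⟨B', -, rfl⟩
  exact (Submodule.finrank_le (AddSubgroup.toIntSubmodule B')).trans (by simp)

lemma isTorsionOverSub_of_gkTGA_lt {M : Type*} [AddCommGroup M] [Module Rᵐᵒᵖ M]
    {B : AddSubgroup (Fin n → ℤ)} (hB : gkTGA F bar M < rk B) : IsTorsionOverSub F bar B M :=
  not_not.1 fun hnt => (rk_le_gkTGA hnt).not_gt hB

namespace IsOreModuleLocalizationData

variable {R' : Type v} [Ring R'] {φ : R →+* R'} {M : Type u} [AddCommGroup M] [Module Rᵐᵒᵖ M]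
  {M' : Type v} [AddCommGroup M'] [Module R'ᵐᵒᵖ M'] {ψ : M →+ M'}

lemma mem_of_forall_op_smul_mem {C : Set R} (hψ : IsOreModuleLocalizationData C φ ψ)
    {T : Set M} (hT : Submodule.span Rᵐᵒᵖ T = ⊤) {N : AddSubmonoid M'}
    (hN : ∀ m ∈ T, ∀ y : R', op y • ψ m ∈ N) (m' : M') : m' ∈ N := by
  have hspan : ∀ m ∈ Submodule.span Rᵐᵒᵖ T, ∀ y : R', op y • ψ m ∈ N := by
    intro m hm
    induction hm using Submodule.span_induction with
    | mem m hm => exact hN m hm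
    | zero => simp [N.zero_mem]
    | add m₁ m₂ _ _ h₁ h₂ =>
      intro y
      rw [map_add, smul_add]
      exact N.add_mem (h₁ y) (h₂ y)
    | smul a m _ hm =>
      intro y
      rw [← op_unop a, hψ.semilinear, ← mul_smul, ← op_mul]
      exact hm _
  obtain ⟨m, s, -, -, rfl⟩ := hψ.surj m'
  exact hspan m (hT ▸ Submodule.mem_top) _

lemma nontrivial {B : AddSubgroup (Fin n → ℤ)}
    (hψ : IsOreModuleLocalizationData (tgaSpan F bar B : Set R) φ ψ)
    (htor : ¬ IsTorsionOverSub F bar B M) : Nontrivial M' := by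
  simp only [IsTorsionOverSub, not_forall, not_exists, not_and] at htor
  obtain ⟨m, hm⟩ := htor
  refine ⟨ψ m, 0, fun hψm => ?_⟩
  obtain ⟨s, hs, hs0, hsm⟩ := (hψ.ker m).1 hψm
  exact hm s hs hs0 hsm

lemma exists_ne_zero_op_smul_eq_zero (h : IsTwistedGroupAlgebra F R bar τ)
    {B B' : AddSubgroup (Fin n → ℤ)} (hφ : IsOreLocalizationData (tgaSpan F bar B : Set R) φ)
    (hψ : IsOreModuleLocalizationData (tgaSpan F bar B : Set R) φ ψ) (hBB' : B ≤ B')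
    (htor : IsTorsionOverSub F bar B' M) (v : M') :
    ∃ β ∈ tgaSpan F bar B', β ≠ 0 ∧ op (φ β) • v = 0 := by
  obtain ⟨m, s, hs, hs0, rfl⟩ := hψ.surj v
  obtain ⟨β, hβ, hβ0, hβm⟩ := htor m
  have hs' : s ∈ tgaSpan F bar B' := Submodule.span_mono (Set.image_mono hBB') hs
  refine ⟨s * β, h.mul_mem_tgaSpan hs' hβ, h.mul_ne_zero hs0 hβ0, ?_⟩
  rw [← mul_smul, ← op_mul, map_mul, Ring.inverse_mul_cancel_left _ _ (hφ.isUnit s hs hs0),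
    ← hψ.semilinear, hβm, map_zero]

lemma exists_finset_forall_bar_single_smul_mem_span (h : IsTwistedGroupAlgebra F R bar τ)
    {r : ℕ} (hφ : IsOreLocalizationData (tgaSpan F bar (stdSub n r) : Set R) φ)
    (hψ : IsOreModuleLocalizationData (tgaSpan F bar (stdSub n r) : Set R) φ ψ)
    (hgk : gkTGA F bar M = r) {j : Fin n} (hj : r ≤ (j : ℕ)) (v : M') :
    ∃ G : Finset M', ∀ m : ℤ,
      op (φ (bar (Pi.single j m))) • v ∈ Submodule.span (hφ.quotDivisionSubring h).op ↑G := by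
  set s := insert j (Finset.univ.filter fun i : Fin n => (i : ℕ) < r)
  have hrk : gkTGA F bar M < rk (coordSub n s) := by
    rw [rk_coordSub, Finset.card_insert_of_notMem (by simpa using hj), Fin.card_filter_val_lt,
      hgk]
    omega
  have hle : stdSub n r ≤ coordSub n s := fun x hx i hi =>
    hx i (not_lt.1 fun hir => hi (Finset.mem_insert_of_mem (by simpa using hir)))
  obtain ⟨β, hβ, hβ0, hv⟩ :=
    hψ.exists_ne_zero_op_smul_eq_zero h hφ hle (isTorsionOverSub_of_gkTGA_lt hrk) v
  refine hφ.exists_finset_forall_bar_single_smul_mem_span h j (fun a ha i hi => ?_) hβ hβ0 hv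
  rcases eq_or_ne i j with rfl | hij
  · simp
  · simpa [hij] using ha i (by simpa [s, hij] using hi)

lemma finite_quotDivisionSubring (h : IsTwistedGroupAlgebra F R bar τ) {r : ℕ}
    (hφ : IsOreLocalizationData (tgaSpan F bar (stdSub n r) : Set R) φ)
    (hψ : IsOreModuleLocalizationData (tgaSpan F bar (stdSub n r) : Set R) φ ψ)
    [Module.Finite Rᵐᵒᵖ M] (hgk : gkTGA F bar M = r) :
    Module.Finite (hφ.quotDivisionSubring h).op M' := by
  classical
  obtain ⟨T, hT⟩ := Module.Finite.fg_top (R := Rᵐᵒᵖ) (M := M)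
  choose G hG using fun m : M => hφ.exists_finset_forall_bar_smul_mem_span h
    (fun j hj v => hψ.exists_finset_forall_bar_single_smul_mem_span h hφ hgk hj v) (ψ m)
  have hsplit : ∀ e : Fin n → ℤ, ∃ b ∈ stdSub n r,
      ∃ t ∈ {t : Fin n → ℤ | ∀ i : Fin n, (i : ℕ) < r → t i = 0}, e = b + t := fun e =>
    ⟨fun i => if (i : ℕ) < r then e i else 0, fun i hi => by simp [not_lt.2 hi],
      fun i => if (i : ℕ) < r then 0 else e i, fun i hi => by simp [hi],
      by ext i; simp only [Pi.add_apply]; split_ifs <;> simp⟩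
  refine ⟨⟨T.biUnion G, eq_top_iff.2 fun m' _ => ?_⟩⟩
  refine hψ.mem_of_forall_op_smul_mem hT (N := (Submodule.span _ _).toAddSubmonoid)
    (fun m hm y => ?_) m'
  refine op_smul_mem_of_mem_span (fun x hx => ?_) (hφ.mem_span_image_map_bar h hsplit y)
  obtain ⟨t, ht, rfl⟩ := hx
  exact Submodule.span_mono (Finset.coe_subset.2 (Finset.subset_biUnion_of_mem G hm)) (hG m t ht)

end IsOreModuleLocalizationData

end TwistedGroupAlgebra

theorem localization_nonzero_and_finiteDimensional_general {F : Type u} [Field F] {n : ℕ}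
    {R : Type u} [Ring R] [Algebra F R]
    {bar : (Fin n → ℤ) → Rˣ} {τ : (Fin n → ℤ) → (Fin n → ℤ) → F}
    (h : IsTwistedGroupAlgebra F R bar τ)
    (M : Type u) [AddCommGroup M] [Module Rᵐᵒᵖ M] [Module.Finite Rᵐᵒᵖ M]
    (r : ℕ) (hgk : gkTGA F bar M = r)
    (htor : ¬ IsTorsionOverSub F bar (stdSub n r) M)
    -- the Ore localization `R' = (F∗A)S⁻¹` at `S = F∗⟨x₁,…,x_r⟩∖{0}` :
    (R' : Type u) [Ring R'] (φ : R →+* R')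
    (hφ : IsOreLocalizationData (tgaSpan F bar (stdSub n r) : Set R) φ)
    -- the corresponding localization `M' = M S⁻¹` of `M` :
    (M' : Type u) [AddCommGroup M'] [Module R'ᵐᵒᵖ M'] (ψ : M →+ M')
    (hψ : IsOreModuleLocalizationData (tgaSpan F bar (stdSub n r) : Set R) φ ψ) :
    Nontrivial M' ∧
      ∃ (k : ℕ) (g : Fin k → M'), ∀ m' : M', ∃ c : Fin k → R',
        (∀ i, c i ∈ quotDivisionRing (tgaSpan F bar (stdSub n r) : Set R) φ) ∧
        m' = ∑ i, op (c i) • g i := by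
  refine ⟨hψ.nontrivial htor, ?_⟩
  have := hψ.finite_quotDivisionSubring h hφ hgk
  obtain ⟨k, g, hg⟩ := Module.Finite.exists_fin (R := (hφ.quotDivisionSubring h).op) (M := M')
  refine ⟨k, g, fun m' => ?_⟩
  obtain ⟨c, hc⟩ :=
    (Submodule.mem_span_range_iff_exists_fun _).1 (hg ▸ Submodule.mem_top (x := m'))
  exact ⟨fun i => (c i : R'ᵐᵒᵖ).unop, fun i => (c i).2, hc.symm⟩

/-- **Lemma.** Let `M` be a finitely generated right `F∗A`-module with `gk(M) = r`
(`0 < r < n`) that is not `F∗⟨x₁,…,x_r⟩`-torsion, let `S = F∗⟨x₁,…,x_r⟩∖{0}` and let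
`D = F(x₁,…,x_r)` be the quotient division ring of `F∗⟨x₁,…,x_r⟩`, so that the Ore
localization `(F∗A)S⁻¹` is the crossed product `D∗⟨x_{r+1},…,x_n⟩`.  Then the
localization `M S⁻¹` is a nonzero module that is finite dimensional as a `D`-vector
space. -/
theorem localization_nonzero_and_finiteDimensional {F : Type u} [Field F] {n : ℕ}
    {R : Type u} [Ring R] [Algebra F R]
    {bar : (Fin n → ℤ) → Rˣ} {τ : (Fin n → ℤ) → (Fin n → ℤ) → F}
    (h : IsTwistedGroupAlgebra F R bar τ)
    (M : Type u) [AddCommGroup M] [Module Rᵐᵒᵖ M] [Module.Finite Rᵐᵒᵖ M]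
    (r : ℕ) (hgk : gkTGA F bar M = r) (h0 : 0 < r) (hrn : r < n)
    (htor : ¬ IsTorsionOverSub F bar (stdSub n r) M)
    -- the Ore localization `R' = (F∗A)S⁻¹` at `S = F∗⟨x₁,…,x_r⟩∖{0}` :
    (R' : Type u) [Ring R'] (φ : R →+* R')
    (hφ : IsOreLocalizationData (tgaSpan F bar (stdSub n r) : Set R) φ)
    -- the corresponding localization `M' = M S⁻¹` of `M` :
    (M' : Type u) [AddCommGroup M'] [Module R'ᵐᵒᵖ M'] (ψ : M →+ M')
    (hψ : IsOreModuleLocalizationData (tgaSpan F bar (stdSub n r) : Set R) φ ψ) :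
    Nontrivial M' ∧
      ∃ (k : ℕ) (g : Fin k → M'), ∀ m' : M', ∃ c : Fin k → R',
        (∀ i, c i ∈ quotDivisionRing (tgaSpan F bar (stdSub n r) : Set R) φ) ∧
        m' = ∑ i, op (c i) • g i :=
  localization_nonzero_and_finiteDimensional_general h M r hgk htor R' φ hφ M' ψ hψ
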